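/- For all integers k,l ≥ 0 with 2k + l ≤ n, the permutation w₀ ∘ c_{k,l} is an involution and is conjugate to c_{k, n−2k−l} by an element of the centralizer of w₀ in S_{2n+1}; that is, there exists g ∈ S_{2n+1} with g∘w₀ = w₀∘g and w₀ ∘ c_{k,l} = g ∘ c_{k,n−2k−l} ∘ g⁻¹. -/

import Mathlib

open Fin.NatCast in
/-- The involution `c_{k,l}` in the symmetric group on `{0, 1, …, 2n}`: it swaps
`2j ↔ 2j+1` and `2n−2j−1 ↔ 2n−2j` for each `0 ≤ j < k`, maps `n+i ↦ n−i` for every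
integer `i` with `−l ≤ i ≤ l`, and fixes all other points.  (Here it is written as a
product of the corresponding disjoint transpositions.) -/
def cA (n k l : ℕ) : Equiv.Perm (Fin (2 * n + 1)) :=
  (((List.range k).map fun j =>
      Equiv.swap ((2 * j : ℕ) : Fin (2 * n + 1)) ((2 * j + 1 : ℕ) : Fin (2 * n + 1)) *
      Equiv.swap ((2 * n - 2 * j - 1 : ℕ) : Fin (2 * n + 1))
        ((2 * n - 2 * j : ℕ) : Fin (2 * n + 1))).prod) *
  (((List.range l).map fun i =>
      Equiv.swap ((n - (i + 1) : ℕ) : Fin (2 * n + 1))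
        ((n + (i + 1) : ℕ) : Fin (2 * n + 1))).prod)

/-- The longest element `w₀` of the symmetric group on `{0, 1, …, 2n}`:
the reversal `i ↦ 2n − i`. -/
def wA (n : ℕ) : Equiv.Perm (Fin (2 * n + 1)) := Fin.revPerm

/-!
Both `w₀` and `c_{k,l}` are involutions and they commute, so `w₀ c_{k,l}` is an involution.

The conjugator `g` commutes with `w₀` and does not depend on `l`. Outside `[2k, 2n - 2k]` it
exchanges `x` and `2n - x` for odd `x`, which turns the pairs `{2j, 2j + 1}` of `c_{k,m}` into
the pairs `{2j, 2n - 2j - 1}` of `w₀ c_{k,l}`. On `[2k, 2n - 2k]` the involution `c_{k,m}`, with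
`m = n - 2k - l`, exchanges `x` and `2n - x` for `2k + l ≤ x < n` and fixes `[2k, 2k + l)`,
whereas `w₀ c_{k,l}` does the same for `2k ≤ x < 2k + m` and `[n - l, n)`; reversing
`[2k, n - 1]` and, symmetrically, `[n + 1, 2n - 2k]` matches the two.

The permutations are modelled by functions on `ℕ`, on which every identity is a case analysis in
linear arithmetic.
-/

open Fin.NatCast Equiv

lemma Fin.val_swap_natCast {N : ℕ} [NeZero N] {a b : ℕ} (ha : a < N) (hb : b < N) (x : Fin N) :
    (swap (a : Fin N) b x).val = if x.val = a then b else if x.val = b then a else x.val := by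
  rw [swap_apply_def]
  simp only [Fin.ext_iff, Fin.val_cast_of_lt ha, Fin.val_cast_of_lt hb]
  split_ifs <;> simp only [Fin.val_cast_of_lt ha, Fin.val_cast_of_lt hb]

def swapPairsNat (n k x : ℕ) : ℕ :=
  if x < 2 * k then (if x % 2 = 0 then x + 1 else x - 1)
  else if 2 * n - 2 * k < x then (if x % 2 = 0 then x - 1 else x + 1)
  else x

def revCenterNat (n l x : ℕ) : ℕ := if n - l ≤ x ∧ x ≤ n + l then 2 * n - x else x

def cANat (n k l x : ℕ) : ℕ := swapPairsNat n k (revCenterNat n l x)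

def conjugatorNat (n k x : ℕ) : ℕ :=
  if x < 2 * k ∨ 2 * n - 2 * k < x then (if x % 2 = 0 then x else 2 * n - x)
  else if x < n then 2 * k + n - 1 - x
  else if n < x then 3 * n + 1 - 2 * k - x
  else n

section

variable {n k l x : ℕ}

lemma cANat_cANat (hkl : 2 * k + l ≤ n) (hx : x ≤ 2 * n) : cANat n k l (cANat n k l x) = x := by
  simp only [cANat, swapPairsNat, revCenterNat]
  repeat' (first | omega | split)

lemma cANat_rev (hkl : 2 * k + l ≤ n) (hx : x ≤ 2 * n) :
    cANat n k l (2 * n - x) = 2 * n - cANat n k l x := by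
  simp only [cANat, swapPairsNat, revCenterNat]
  repeat' (first | omega | split)

lemma conjugatorNat_rev (hx : x ≤ 2 * n) :
    conjugatorNat n k (2 * n - x) = 2 * n - conjugatorNat n k x := by
  unfold conjugatorNat
  split_ifs <;> omega

set_option maxHeartbeats 400000 in
lemma rev_cANat_conjugatorNat (hkl : 2 * k + l ≤ n) (hx : x ≤ 2 * n) :
    2 * n - cANat n k l (conjugatorNat n k x) =
      conjugatorNat n k (cANat n k (n - 2 * k - l) x) := by
  simp only [cANat, conjugatorNat, swapPairsNat, revCenterNat]
  repeat' (first | omega | split)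

end

def swapPairs (n k : ℕ) : Perm (Fin (2 * n + 1)) :=
  ((List.range k).map fun j =>
      swap ((2 * j : ℕ) : Fin (2 * n + 1)) ((2 * j + 1 : ℕ) : Fin (2 * n + 1)) *
      swap ((2 * n - 2 * j - 1 : ℕ) : Fin (2 * n + 1))
        ((2 * n - 2 * j : ℕ) : Fin (2 * n + 1))).prod

def revCenter (n l : ℕ) : Perm (Fin (2 * n + 1)) :=
  ((List.range l).map fun i =>
      swap ((n - (i + 1) : ℕ) : Fin (2 * n + 1)) ((n + (i + 1) : ℕ) : Fin (2 * n + 1))).prod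

lemma swapPairs_apply_val {n k : ℕ} (hk : 2 * k ≤ n) (x : Fin (2 * n + 1)) :
    (swapPairs n k x).val = swapPairsNat n k x.val := by
  have hx := x.isLt
  induction k generalizing x with
  | zero => simp only [swapPairs, swapPairsNat]; split_ifs <;> simp <;> omega
  | succ k ih =>
    simp only [swapPairs, List.range_succ, List.map_append, List.map_cons, List.map_nil,
      List.prod_append, List.prod_cons, List.prod_nil, mul_one, Perm.mul_apply] at ih ⊢
    rw [ih (by omega) _ (Fin.isLt _), Fin.val_swap_natCast (by omega) (by omega),
      Fin.val_swap_natCast (by omega) (by omega)]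
    unfold swapPairsNat
    split_ifs <;> omega

lemma revCenter_apply_val {n l : ℕ} (hl : l ≤ n) (x : Fin (2 * n + 1)) :
    (revCenter n l x).val = revCenterNat n l x.val := by
  have hx := x.isLt
  induction l generalizing x with
  | zero => simp only [revCenter, revCenterNat]; split_ifs <;> simp; omega
  | succ l ih =>
    simp only [revCenter, List.range_succ, List.map_append, List.map_cons, List.map_nil,
      List.prod_append, List.prod_cons, List.prod_nil, mul_one, Perm.mul_apply] at ih ⊢
    rw [ih (by omega) _ (Fin.isLt _), Fin.val_swap_natCast (by omega) (by omega)]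
    unfold revCenterNat
    split_ifs <;> omega

lemma cA_apply_val {n k l : ℕ} (hkl : 2 * k + l ≤ n) (x : Fin (2 * n + 1)) :
    (cA n k l x).val = cANat n k l x.val := by
  change (swapPairs n k (revCenter n l x)).val = _
  rw [swapPairs_apply_val (by omega), revCenter_apply_val (by omega), cANat]

lemma wA_apply_val {n : ℕ} (x : Fin (2 * n + 1)) : (wA n x).val = 2 * n - x.val := by
  simp only [wA, Fin.revPerm_apply, Fin.val_rev]
  omega

def conjugator (n k : ℕ) : Perm (Fin (2 * n + 1)) :=
  Function.Involutive.toPerm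
    (fun x => ⟨conjugatorNat n k x.val, by unfold conjugatorNat; split_ifs <;> omega⟩)
    fun x => Fin.ext (by simp only; unfold conjugatorNat; split_ifs <;> omega)

lemma conjugator_apply_val (n k : ℕ) (x : Fin (2 * n + 1)) :
    (conjugator n k x).val = conjugatorNat n k x.val :=
  rfl

lemma wA_mul_self (n : ℕ) : wA n * wA n = 1 := by
  ext x
  simp [wA]

lemma cA_mul_self {n k l : ℕ} (hkl : 2 * k + l ≤ n) : cA n k l * cA n k l = 1 := by
  ext x
  rw [Perm.mul_apply, cA_apply_val hkl, cA_apply_val hkl, Perm.one_apply,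
    cANat_cANat hkl (by omega)]

lemma commute_wA_cA {n k l : ℕ} (hkl : 2 * k + l ≤ n) : Commute (wA n) (cA n k l) := by
  ext x
  rw [Perm.mul_apply, Perm.mul_apply, cA_apply_val hkl, wA_apply_val, wA_apply_val,
    cA_apply_val hkl, cANat_rev hkl (by omega)]

lemma commute_conjugator_wA (n k : ℕ) : Commute (conjugator n k) (wA n) := by
  ext x
  rw [Perm.mul_apply, Perm.mul_apply, conjugator_apply_val, wA_apply_val, wA_apply_val,
    conjugator_apply_val, conjugatorNat_rev (by omega)]

lemma wA_mul_cA_mul_conjugator {n k l : ℕ} (hkl : 2 * k + l ≤ n) :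
    wA n * cA n k l * conjugator n k = conjugator n k * cA n k (n - 2 * k - l) := by
  ext x
  rw [Perm.mul_apply, Perm.mul_apply, Perm.mul_apply, wA_apply_val, cA_apply_val hkl,
    conjugator_apply_val, conjugator_apply_val, cA_apply_val (by omega),
    rev_cANat_conjugatorNat hkl (by omega)]

theorem stmt4_general (n : ℕ) (k l : ℕ) (hkl : 2 * k + l ≤ n) :
    (wA n * cA n k l) * (wA n * cA n k l) = 1 ∧
    ∃ g : Equiv.Perm (Fin (2 * n + 1)),
      g * wA n = wA n * g ∧ wA n * cA n k l = g * cA n k (n - 2 * k - l) * g⁻¹ := by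
  refine ⟨?_, conjugator n k, commute_conjugator_wA n k,
    eq_mul_inv_of_mul_eq (wA_mul_cA_mul_conjugator hkl)⟩
  rw [mul_assoc, ← mul_assoc (cA n k l), ← (commute_wA_cA hkl).eq, mul_assoc, cA_mul_self hkl,
    mul_one, wA_mul_self]

/-- For all integers `k, l ≥ 0` with `2k + l ≤ n`, the permutation `w₀ ∘ c_{k,l}` is an
involution and is conjugate to `c_{k, n−2k−l}` by an element of the centralizer of `w₀`
in `S_{2n+1}`. -/
theorem stmt4 (n : ℕ) (hn : 1 ≤ n) (k l : ℕ) (hkl : 2 * k + l ≤ n) :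
    (wA n * cA n k l) * (wA n * cA n k l) = 1 ∧
    ∃ g : Equiv.Perm (Fin (2 * n + 1)),
      g * wA n = wA n * g ∧ wA n * cA n k l = g * cA n k (n - 2 * k - l) * g⁻¹ :=
  stmt4_general n k l hkl
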